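/- With the notation of the previous setting (σ_X² = w*²τ₂*² + τ₁*², σ_Y² = w*²y² + τ₁*², D₁₂(η) = (1/2)log(ησ_X² + (1−η)σ_Y²) − (η/2)log σ_X² − ((1−η)/2)log τ₁*², w* ≠ 0, y² ≠ τ₂*², y ≠ 0), the right derivative of D₁₂ at η = 0 is positive if and only if w*²(τ₂*² − y²)/(w*²y² + τ₁*²) > log(1 + w*²τ₂*²/τ₁*²). Consequently, when this inequality holds D₁₂ attains its maximum over [0,1] at a unique interior point η* ∈ (0,1), and when it fails D₁₂ is strictly decreasing on (0,1). -/

import Mathlib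

/-!
The derivative `D12'` of `D12` is strictly decreasing on `[0, 1]`, and `D12' 1 < 0` always, by
`log x < x - 1` and `τ₁ ≤ σ_Y²`. So either `D12' 0 > 0`, the derivative vanishes at exactly one
interior point (Darboux) and `D12` rises to it and falls after it, or `D12' 0 ≤ 0` and `D12` is
strictly decreasing. Since `1 + w²τ₂/τ₁ = σ_X²/τ₁`, the sign of `D12' 0` is the stated inequality.
-/

open Filter Set

/-- The concentration exponent `D₁₂(η)` for the true model `X(2) → X(1)`
with a fraction `η` of observational samples. -/
noncomputable def D12 (sX sY t1 : ℝ) (η : ℝ) : ℝ :=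
  (1 / 2) * Real.log (η * sX + (1 - η) * sY)
    - η / 2 * Real.log sX - (1 - η) / 2 * Real.log t1

section DerivStrictAnti

variable {f f' : ℝ → ℝ} {a b c : ℝ}

theorem strictMonoOn_Icc_of_strictAntiOn_deriv (hf : ∀ x ∈ Icc a b, HasDerivAt f (f' x) x)
    (hf' : StrictAntiOn f' (Icc a b)) (hc : c ∈ Icc a b) (hc0 : 0 ≤ f' c) :
    StrictMonoOn f (Icc a c) := by
  have hsub : Icc a c ⊆ Icc a b := Icc_subset_Icc_right hc.2
  refine strictMonoOn_of_deriv_pos (convex_Icc a c)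
    (fun x hx => (hf x (hsub hx)).continuousAt.continuousWithinAt) fun x hx => ?_
  rw [interior_Icc] at hx
  have hx' := hsub (Ioo_subset_Icc_self hx)
  rw [(hf x hx').deriv]
  exact hc0.trans_lt (hf' hx' hc hx.2)

theorem strictAntiOn_Icc_of_strictAntiOn_deriv (hf : ∀ x ∈ Icc a b, HasDerivAt f (f' x) x)
    (hf' : StrictAntiOn f' (Icc a b)) (hc : c ∈ Icc a b) (hc0 : f' c ≤ 0) :
    StrictAntiOn f (Icc c b) := by
  have hsub : Icc c b ⊆ Icc a b := Icc_subset_Icc_left hc.1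
  refine strictAntiOn_of_deriv_neg (convex_Icc c b)
    (fun x hx => (hf x (hsub hx)).continuousAt.continuousWithinAt) fun x hx => ?_
  rw [interior_Icc] at hx
  have hx' := hsub (Ioo_subset_Icc_self hx)
  rw [(hf x hx').deriv]
  exact (hf' hc hx' hx.1).trans_le hc0

theorem existsUnique_isMaxOn_Icc_of_strictAntiOn_deriv (hab : a ≤ b)
    (hf : ∀ x ∈ Icc a b, HasDerivAt f (f' x) x) (hf' : StrictAntiOn f' (Icc a b))
    (ha : 0 < f' a) (hb : f' b < 0) :
    ∃! η, η ∈ Ioo a b ∧ ∀ x ∈ Icc a b, f x ≤ f η := by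
  obtain ⟨c, hc, hc0⟩ : (0 : ℝ) ∈ f' '' Ioo a b :=
    exists_hasDerivWithinAt_eq_of_lt_of_gt hab (fun x hx => (hf x hx).hasDerivWithinAt) ha hb
  have hc' := Ioo_subset_Icc_self hc
  have hmono := strictMonoOn_Icc_of_strictAntiOn_deriv hf hf' hc' hc0.ge
  have hanti := strictAntiOn_Icc_of_strictAntiOn_deriv hf hf' hc' hc0.le
  have hlt : ∀ x ∈ Icc a b, x ≠ c → f x < f c := by
    intro x hx hxc
    rcases hxc.lt_or_gt with h | h
    · exact hmono ⟨hx.1, h.le⟩ ⟨hc.1.le, le_rfl⟩ h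
    · exact hanti ⟨le_rfl, hc.2.le⟩ ⟨h.le, hx.2⟩ h
  refine ⟨c, ⟨hc, fun x hx => ?_⟩, fun η ⟨hη, hmax⟩ => ?_⟩
  · rcases eq_or_ne x c with rfl | h
    · exact le_rfl
    · exact (hlt x hx h).le
  · by_contra h
    exact (hmax c hc').not_gt (hlt η (Ioo_subset_Icc_self hη) h)

end DerivStrictAnti

noncomputable def D12' (sX sY t1 : ℝ) (η : ℝ) : ℝ :=
  (sX - sY) / (2 * (η * sX + (1 - η) * sY)) - Real.log sX / 2 + Real.log t1 / 2

section Exponent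

variable {sX sY t1 η : ℝ}

theorem interp_pos (hX : 0 < sX) (hY : 0 < sY) (hη : η ∈ Icc (0 : ℝ) 1) :
    0 < η * sX + (1 - η) * sY := by
  simpa using convex_Ioi (0 : ℝ) hX hY hη.1 (sub_nonneg.2 hη.2) (add_sub_cancel η 1)

theorem hasDerivAt_D12 (h : η * sX + (1 - η) * sY ≠ 0) :
    HasDerivAt (D12 sX sY t1) (D12' sX sY t1 η) η := by
  have hL : HasDerivAt (fun t : ℝ => t * sX + (1 - t) * sY) (sX - sY) η := by
    have := ((hasDerivAt_id η).mul_const sX).add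
      (((hasDerivAt_const η (1 : ℝ)).sub (hasDerivAt_id η)).mul_const sY)
    exact this.congr_deriv (by ring)
  have hlog := ((Real.hasDerivAt_log h).comp η hL).const_mul (1 / 2 : ℝ)
  have hmid := ((hasDerivAt_id η).div_const 2).mul_const (Real.log sX)
  have hend := (((hasDerivAt_const η (1 : ℝ)).sub (hasDerivAt_id η)).div_const 2).mul_const
    (Real.log t1)
  refine ((hlog.sub hmid).sub hend).congr_deriv ?_
  simp only [D12']
  field_simp
  ring

theorem strictAntiOn_D12' (hX : 0 < sX) (hY : 0 < sY) (hne : sX ≠ sY) :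
    StrictAntiOn (D12' sX sY t1) (Icc 0 1) := by
  intro a ha b hb hab
  have hgap : 0 < (b - a) * (sX - sY) ^ 2 :=
    mul_pos (sub_pos.2 hab) (sq_pos_of_ne_zero (sub_ne_zero.2 hne))
  have hfrac : (sX - sY) / (2 * (b * sX + (1 - b) * sY))
      < (sX - sY) / (2 * (a * sX + (1 - a) * sY)) := by
    rw [div_lt_div_iff₀ (by linarith [interp_pos hX hY hb]) (by linarith [interp_pos hX hY ha])]
    linarith
  unfold D12'
  linarith

theorem D12'_zero_pos_iff (hX : 0 < sX) (ht : 0 < t1) :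
    0 < D12' sX sY t1 0 ↔ Real.log (sX / t1) < (sX - sY) / sY := by
  rw [Real.log_div hX.ne' ht.ne']
  simp only [D12', zero_mul, sub_zero, zero_add, one_mul]
  rw [mul_comm, ← div_div]
  constructor <;> intro h <;> linarith

theorem D12'_one_neg (hX : 0 < sX) (ht : 0 < t1) (htY : t1 ≤ sY) (hne : sX ≠ sY) :
    D12' sX sY t1 1 < 0 := by
  have hY := ht.trans_le htY
  have hlog : Real.log (sY / sX) < sY / sX - 1 :=
    Real.log_lt_sub_one_of_pos (by positivity) (by rwa [Ne, div_eq_one_iff_eq hX.ne', eq_comm])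
  rw [Real.log_div hY.ne' hX.ne', show sY / sX - 1 = -((sX - sY) / sX) by field_simp; ring]
    at hlog
  have := Real.log_le_log ht htY
  simp only [D12', one_mul, sub_self, zero_mul, add_zero]
  rw [mul_comm, ← div_div]
  linarith

end Exponent

theorem stmt_12_general (w τ1 τ2 y : ℝ) (hw : w ≠ 0) (h1 : 0 < τ1) (h2 : 0 < τ2)
    (hy2 : y ^ 2 ≠ τ2) :
    let sX := w ^ 2 * τ2 + τ1
    let sY := w ^ 2 * y ^ 2 + τ1
    (0 < derivWithin (D12 sX sY τ1) (Set.Ici 0) 0 ↔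
        w ^ 2 * (τ2 - y ^ 2) / (w ^ 2 * y ^ 2 + τ1) >
          Real.log (1 + w ^ 2 * τ2 / τ1)) ∧
      (w ^ 2 * (τ2 - y ^ 2) / (w ^ 2 * y ^ 2 + τ1) >
          Real.log (1 + w ^ 2 * τ2 / τ1) →
        ∃! η : ℝ, η ∈ Set.Ioo (0 : ℝ) 1 ∧
          ∀ x ∈ Set.Icc (0 : ℝ) 1, D12 sX sY τ1 x ≤ D12 sX sY τ1 η) ∧
      (¬ (w ^ 2 * (τ2 - y ^ 2) / (w ^ 2 * y ^ 2 + τ1) >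
          Real.log (1 + w ^ 2 * τ2 / τ1)) →
        StrictAntiOn (D12 sX sY τ1) (Set.Ioo (0 : ℝ) 1)) := by
  intro sX sY
  have hX : 0 < sX := by positivity
  have hY : 0 < sY := by positivity
  have htY : τ1 ≤ sY := le_add_of_nonneg_left (by positivity)
  have hne : sX ≠ sY := fun h =>
    hy2 (mul_left_cancel₀ (pow_ne_zero 2 hw) (add_right_cancel h)).symm
  have hderiv : ∀ η ∈ Icc (0 : ℝ) 1, HasDerivAt (D12 sX sY τ1) (D12' sX sY τ1 η) η :=
    fun η hη => hasDerivAt_D12 (interp_pos hX hY hη).ne'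
  have hanti : StrictAntiOn (D12' sX sY τ1) (Icc 0 1) := strictAntiOn_D12' hX hY hne
  have hcond : 0 < D12' sX sY τ1 0 ↔
      w ^ 2 * (τ2 - y ^ 2) / (w ^ 2 * y ^ 2 + τ1) > Real.log (1 + w ^ 2 * τ2 / τ1) := by
    rw [D12'_zero_pos_iff hX h1, gt_iff_lt,
      show sX / τ1 = 1 + w ^ 2 * τ2 / τ1 by field_simp; ring,
      show sX - sY = w ^ 2 * (τ2 - y ^ 2) by ring]
  have h0 : (0 : ℝ) ∈ Icc 0 1 := left_mem_Icc.2 zero_le_one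
  refine ⟨?_, fun hC => ?_, fun hC => ?_⟩
  · rw [(hderiv 0 h0).hasDerivWithinAt.derivWithin (uniqueDiffOn_Ici 0 0 self_mem_Ici)]
    exact hcond
  · exact existsUnique_isMaxOn_Icc_of_strictAntiOn_deriv zero_le_one hderiv hanti
      (hcond.2 hC) (D12'_one_neg hX h1 htY hne)
  · exact (strictAntiOn_Icc_of_strictAntiOn_deriv hderiv hanti h0
      (not_lt.1 (hC ∘ hcond.1))).mono Ioo_subset_Icc_self

theorem stmt_12 (w τ1 τ2 y : ℝ) (hw : w ≠ 0) (h1 : 0 < τ1) (h2 : 0 < τ2)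
    (hy : y ≠ 0) (hy2 : y ^ 2 ≠ τ2) :
    let sX := w ^ 2 * τ2 + τ1
    let sY := w ^ 2 * y ^ 2 + τ1
    (0 < derivWithin (D12 sX sY τ1) (Set.Ici 0) 0 ↔
        w ^ 2 * (τ2 - y ^ 2) / (w ^ 2 * y ^ 2 + τ1) >
          Real.log (1 + w ^ 2 * τ2 / τ1)) ∧
      (w ^ 2 * (τ2 - y ^ 2) / (w ^ 2 * y ^ 2 + τ1) >
          Real.log (1 + w ^ 2 * τ2 / τ1) →
        ∃! η : ℝ, η ∈ Set.Ioo (0 : ℝ) 1 ∧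
          ∀ x ∈ Set.Icc (0 : ℝ) 1, D12 sX sY τ1 x ≤ D12 sX sY τ1 η) ∧
      (¬ (w ^ 2 * (τ2 - y ^ 2) / (w ^ 2 * y ^ 2 + τ1) >
          Real.log (1 + w ^ 2 * τ2 / τ1)) →
        StrictAntiOn (D12 sX sY τ1) (Set.Ioo (0 : ℝ) 1)) :=
  stmt_12_general w τ1 τ2 y hw h1 h2 hy2
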